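/- Let d ≥ 2 and let P ⊆ ℝ^d be a d-dimensional centrally-symmetric lattice polytope with P°_ℤ = {0} and |P_ℤ| = 3^d. Let F be a facet of P and let x be a lattice point in the relative interior of F. Then x + (P_ℤ \ F_ℤ) ⊆ P_ℤ, i.e., for every lattice point y of P not lying in F, the point x + y is again a lattice point of P. -/

import Mathlib

open Set

noncomputable section

/-- Coordinatewise cast of an integer vector into `ℝ^d`. -/
def ic {d : ℕ} (v : Fin d → ℤ) : Fin d → ℝ := fun i => (v i : ℝ)

/-- `P_ℤ`: the set of lattice points of `ℤ^d` lying in `P`. -/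
def latticePts {d : ℕ} (P : Set (Fin d → ℝ)) : Set (Fin d → ℤ) := {x | ic x ∈ P}

/-- `P°_ℤ`: the set of lattice points of `ℤ^d` lying in the relative interior of `P`. -/
def relintLatticePts {d : ℕ} (P : Set (Fin d → ℝ)) : Set (Fin d → ℤ) :=
  {x | ic x ∈ intrinsicInterior ℝ P}

/-- `P` is a lattice polytope: the convex hull of finitely many points of `ℤ^d`. -/
def IsLatticePolytope {d : ℕ} (P : Set (Fin d → ℝ)) : Prop :=
  ∃ V : Finset (Fin d → ℤ), P = convexHull ℝ (ic '' ↑V)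

/-- `F` is a face of the convex set `P`: a convex extreme subset of `P`. -/
def IsFaceOf {d : ℕ} (P F : Set (Fin d → ℝ)) : Prop :=
  IsExtreme ℝ P F ∧ Convex ℝ F

/-! Reduction mod 3 is injective on `P_ℤ`: if `u ≡ v`, then `(u - v) / 3` is a convex combination
of the interior point `0` and `(u + (-v)) / 2 ∈ P`, hence an interior lattice point, hence `0`.
As `|P_ℤ| = 3^d` it is a bijection onto `(ℤ/3)^d`, so some `z ∈ P_ℤ` has `z ≡ x + y`.

The midpoint of `x` and `y` is interior to `P`: a supporting hyperplane through it would contain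
`x` and `y`, hence all of `F` (as `x` is relatively interior to `F`), hence be the affine span of
the facet `F`; then `y ∈ F` by extremality. So `w = (x + y - z) / 3`, a convex combination of this
midpoint and `-z ∈ P`, is an interior lattice point, `w = 0`, and `x + y = z ∈ P_ℤ`. -/

open Module Topology

section Convex

variable {E : Type*} [NormedAddCommGroup E] [NormedSpace ℝ E] {s P F : Set E} {x y v w : E}

theorem intrinsicInterior_subset_interior_of_affineSpan_eq_top (h : affineSpan ℝ s = ⊤) :
    intrinsicInterior ℝ s ⊆ interior s := by
  have hopen : IsOpen (affineSpan ℝ s : Set E) := by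
    rw [h, AffineSubspace.top_coe]
    exact isOpen_univ
  exact (hopen.isOpenMap_subtype_val.image_interior_subset _).trans
    (interior_mono (image_preimage_subset _ _))

theorem exists_pos_add_smul_mem_of_mem_intrinsicInterior (hx : x ∈ intrinsicInterior ℝ s)
    (hv : v ∈ vectorSpan ℝ s) : ∃ ε : ℝ, 0 < ε ∧ x + ε • v ∈ s := by
  obtain ⟨p, hp, rfl⟩ := hx
  let γ : ℝ → affineSpan ℝ s := fun t =>
    ⟨t • v +ᵥ (p : E), AffineSubspace.vadd_mem_of_mem_direction
      (by rw [direction_affineSpan]; exact Submodule.smul_mem _ t hv) p.2⟩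
  have hγ : Continuous γ := by fun_prop
  have hγ0 : γ 0 = p := by ext; simp [γ]
  have hnear : ∀ᶠ t in 𝓝[>] (0 : ℝ), γ t ∈ interior ((↑) ⁻¹' s) :=
    nhdsWithin_le_nhds (hγ.continuousAt.preimage_mem_nhds (hγ0 ▸ isOpen_interior.mem_nhds hp))
  obtain ⟨ε, hεs, hε⟩ := (hnear.and self_mem_nhdsWithin).exists
  exact ⟨ε, hε, by simpa [γ, add_comm] using interior_subset hεs⟩

theorem LinearMap.eq_of_isMaxOn_of_mem_intrinsicInterior (f : E →ₗ[ℝ] ℝ) (hmax : IsMaxOn f s x)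
    (hx : x ∈ intrinsicInterior ℝ s) {p : E} (hp : p ∈ s) : f p = f x := by
  obtain ⟨ε, hε, hmem⟩ := exists_pos_add_smul_mem_of_mem_intrinsicInterior hx
    (vsub_mem_vectorSpan ℝ (intrinsicInterior_subset hx) hp)
  have h₁ : f (x + ε • (x - p)) ≤ f x := hmax hmem
  have h₂ : f p ≤ f x := hmax hp
  rw [map_add, map_smul, map_sub, smul_eq_mul] at h₁
  nlinarith

theorem vectorSpan_eq_ker_of_finrank_eq [FiniteDimensional ℝ E] {f : Dual ℝ E} (hf : f ≠ 0)
    {c : ℝ} (hc : ∀ p ∈ s, f p = c) (hs : finrank ℝ (vectorSpan ℝ s) = finrank ℝ E - 1) :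
    vectorSpan ℝ s = LinearMap.ker f := by
  refine Submodule.eq_of_le_of_finrank_eq ?_ ?_
  · rw [vectorSpan_def, Submodule.span_le]
    rintro _ ⟨p, hp, q, hq, rfl⟩
    simp [hc p hp, hc q hq]
  · have := Dual.finrank_ker_add_one_of_ne_zero hf
    omega

theorem IsExtreme.mem_of_sub_mem_vectorSpan (hF : IsExtreme ℝ P F)
    (hx : x ∈ intrinsicInterior ℝ F) (hy : y ∈ P) (hxy : x - y ∈ vectorSpan ℝ F) : y ∈ F := by
  obtain ⟨ε, hε, hq⟩ := exists_pos_add_smul_mem_of_mem_intrinsicInterior hx hxy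
  have hseg : x ∈ openSegment ℝ y (x + ε • (x - y)) := by
    refine ⟨ε / (1 + ε), 1 / (1 + ε), by positivity, by positivity, by field_simp; ring, ?_⟩
    match_scalars
    · ring
    · field_simp
  exact hF.left_mem_of_mem_openSegment hy (hF.subset hq) (intrinsicInterior_subset hx) hseg

theorem Convex.exists_isMaxOn_of_notMem_interior (hP : Convex ℝ P) (hne : (interior P).Nonempty)
    (hw : w ∉ interior P) : ∃ f : StrongDual ℝ E, f ≠ 0 ∧ IsMaxOn f P w := by
  obtain ⟨f, hf⟩ := geometric_hahn_banach_open_point hP.interior isOpen_interior hw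
  obtain ⟨a, ha⟩ := hne
  refine ⟨f, fun h => by simpa [h] using hf a ha, fun b hb => ?_⟩
  have hclosure : closure (interior P) ⊆ {b | f b ≤ f w} :=
    closure_minimal (fun b hb => (hf b hb).le) (isClosed_le f.continuous continuous_const)
  rw [hP.closure_interior_eq_closure_of_nonempty_interior ⟨a, ha⟩] at hclosure
  exact hclosure (subset_closure hb)

theorem IsExtreme.openSegment_subset_interior [FiniteDimensional ℝ E] (hP : Convex ℝ P)
    (hne : (interior P).Nonempty) (hF : IsExtreme ℝ P F)
    (hfacet : finrank ℝ (vectorSpan ℝ F) = finrank ℝ E - 1) (hx : x ∈ intrinsicInterior ℝ F)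
    (hy : y ∈ P) (hyF : y ∉ F) : openSegment ℝ x y ⊆ interior P := by
  rintro _ ⟨a, b, ha, hb, hab, rfl⟩
  by_contra hp
  obtain ⟨f, hf0, hmax⟩ := hP.exists_isMaxOn_of_notMem_interior hne hp
  have hfx : f x ≤ f (a • x + b • y) := hmax (hF.subset (intrinsicInterior_subset hx))
  have hfy : f y ≤ f (a • x + b • y) := hmax hy
  simp only [map_add, map_smul, smul_eq_mul] at hfx hfy
  obtain rfl : b = 1 - a := by linarith
  have hxy : f x = f y := by nlinarith
  have hmaxF : IsMaxOn (f : E →ₗ[ℝ] ℝ) F x := fun q hq => by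
    have hfq : f q ≤ f (a • x + (1 - a) • y) := hmax (hF.subset hq)
    simp only [map_add, map_smul, smul_eq_mul, ← hxy] at hfq
    show f q ≤ f x
    linarith
  have hker := vectorSpan_eq_ker_of_finrank_eq (f := (f : Dual ℝ E)) (by exact_mod_cast hf0)
    (fun q hq => LinearMap.eq_of_isMaxOn_of_mem_intrinsicInterior _ hmaxF hx hq) hfacet
  exact hyF (hF.mem_of_sub_mem_vectorSpan hx hy (by simp [hker, hxy]))

end Convex

section Lattice

variable {d : ℕ}

theorem ic_add (u v : Fin d → ℤ) : ic (u + v) = ic u + ic v := by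
  ext; simp [ic]

theorem ic_sub (u v : Fin d → ℤ) : ic (u - v) = ic u - ic v := by
  ext; simp [ic]

theorem ic_zsmul (n : ℤ) (u : Fin d → ℤ) : ic (n • u) = (n : ℝ) • ic u := by
  ext; simp [ic]

theorem ic_zero : ic (0 : Fin d → ℤ) = 0 := by
  ext; simp [ic]

theorem exists_sub_eq_smul_of_intCast_eq {n : ℕ} {u v : Fin d → ℤ}
    (h : ∀ i, (u i : ZMod n) = v i) : ∃ k : Fin d → ℤ, u - v = (n : ℤ) • k := by
  choose k hk using fun i => (ZMod.intCast_eq_intCast_iff_dvd_sub (v i) (u i) n).1 (h i).symm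
  exact ⟨k, funext fun i => by simp [hk i]⟩

theorem neg_ic_mem_of_mem_latticePts {P : Set (Fin d → ℝ)} (hsym : P = -P) {u : Fin d → ℤ}
    (hu : u ∈ latticePts P) : -ic u ∈ P := by
  rw [hsym]
  exact neg_mem_neg.2 hu

theorem eq_of_intCast_eq_of_mem_latticePts {P : Set (Fin d → ℝ)} (hP : Convex ℝ P)
    (hsym : P = -P) (h0 : 0 ∈ interior P) (hint : ∀ u, ic u ∈ interior P → u = 0)
    {u v : Fin d → ℤ} (hu : u ∈ latticePts P) (hv : v ∈ latticePts P)
    (h : ∀ i, (u i : ZMod 3) = v i) : u = v := by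
  obtain ⟨k, hk⟩ := exists_sub_eq_smul_of_intCast_eq h
  have hmid : (1 / 2 : ℝ) • ic u + (1 / 2 : ℝ) • -ic v ∈ P :=
    hP hu (neg_ic_mem_of_mem_latticePts hsym hv) (by norm_num) (by norm_num) (by norm_num)
  have hk_int : ic k ∈ interior P := by
    convert hP.combo_interior_self_mem_interior h0 hmid (a := 1 / 3) (b := 2 / 3)
      (by norm_num) (by norm_num) (by norm_num) using 1
    have := congrArg ic hk
    rw [ic_sub, ic_zsmul] at this
    push_cast at this
    linear_combination (norm := module) (-1 / 3 : ℝ) • this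
  rwa [hint k hk_int, smul_zero, sub_eq_zero] at hk

theorem exists_mem_latticePts_sub_eq_three_smul {P : Set (Fin d → ℝ)} (hP : Convex ℝ P)
    (hsym : P = -P) (h0 : 0 ∈ interior P) (hint : ∀ u, ic u ∈ interior P → u = 0)
    (hcard : (latticePts P).ncard = 3 ^ d) (u : Fin d → ℤ) :
    ∃ z ∈ latticePts P, ∃ k : Fin d → ℤ, u - z = (3 : ℤ) • k := by
  let reduce : (Fin d → ℤ) → Fin d → ZMod 3 := fun v i => v i
  have hinj : InjOn reduce (latticePts P) := fun v hv w hw h =>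
    eq_of_intCast_eq_of_mem_latticePts hP hsym h0 hint hv hw (congrFun h)
  have hsurj : reduce '' latticePts P = univ := by
    refine eq_of_subset_of_ncard_le (subset_univ _) ?_ finite_univ
    rw [hinj.ncard_image, hcard, ncard_univ, Nat.card_eq_fintype_card]
    simp [ZMod.card]
  obtain ⟨z, hz, hzu⟩ : reduce u ∈ reduce '' latticePts P := hsurj ▸ mem_univ _
  obtain ⟨k, hk⟩ := exists_sub_eq_smul_of_intCast_eq (fun i => (congrFun hzu i).symm)
  exact ⟨z, hz, k, by simpa using hk⟩

end Lattice

theorem add_interior_facet_point_general {d : ℕ} (P : Set (Fin d → ℝ))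
    (hpoly : IsLatticePolytope P) (hdim : affineSpan ℝ P = ⊤)
    (hsym : P = -P) (hint : relintLatticePts P = {0})
    (hcard : (latticePts P).ncard = 3 ^ d)
    (F : Set (Fin d → ℝ)) (hF : IsFaceOf P F)
    (hfacet : Module.finrank ℝ (vectorSpan ℝ F) = d - 1)
    (x : Fin d → ℤ) (hx : ic x ∈ intrinsicInterior ℝ F) :
    ∀ y : Fin d → ℤ, y ∈ latticePts P → ic y ∉ F → x + y ∈ latticePts P := by
  intro y hy hyF
  have hP : Convex ℝ P := by
    obtain ⟨V, rfl⟩ := hpoly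
    exact convex_convexHull ℝ _
  have hlat : ∀ u, ic u ∈ interior P → u = 0 := fun u hu => by
    have hu_rel : u ∈ relintLatticePts P := interior_subset_intrinsicInterior hu
    rwa [hint] at hu_rel
  have h0 : (0 : Fin d → ℝ) ∈ interior P := by
    have h0rel : (0 : Fin d → ℤ) ∈ relintLatticePts P := hint ▸ rfl
    exact intrinsicInterior_subset_interior_of_affineSpan_eq_top hdim (ic_zero ▸ h0rel)
  obtain ⟨z, hz, w, hw⟩ := exists_mem_latticePts_sub_eq_three_smul hP hsym h0 hlat hcard (x + y)
  have hmid : (1 / 2 : ℝ) • ic x + (1 / 2 : ℝ) • ic y ∈ interior P :=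
    hF.1.openSegment_subset_interior hP ⟨0, h0⟩ (by rwa [finrank_fin_fun]) hx hy hyF
      ⟨1 / 2, 1 / 2, by norm_num, by norm_num, by norm_num, rfl⟩
  have hw0 : w = 0 := hlat w <| by
    convert hP.combo_interior_self_mem_interior hmid (neg_ic_mem_of_mem_latticePts hsym hz)
      (a := 2 / 3) (b := 1 / 3) (by norm_num) (by norm_num) (by norm_num) using 1
    have := congrArg ic hw
    rw [ic_sub, ic_add, ic_zsmul] at this
    push_cast at this
    linear_combination (norm := module) (-1 / 3 : ℝ) • this
  rw [hw0, smul_zero, sub_eq_zero] at hw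
  rwa [hw]

/-- Let `P` be a `d`-dimensional (`d ≥ 2`) centrally-symmetric lattice polytope with
    `P°_ℤ = {0}` and `|P_ℤ| = 3^d`, let `F` be a facet of `P` and let `x` be a lattice
    point in the relative interior of `F`.  Then for every lattice point `y` of `P`
    not lying in `F`, the point `x + y` is again a lattice point of `P`. -/
theorem add_interior_facet_point {d : ℕ} (hd : 2 ≤ d) (P : Set (Fin d → ℝ))
    (hpoly : IsLatticePolytope P) (hdim : affineSpan ℝ P = ⊤)
    (hsym : P = -P) (hint : relintLatticePts P = {0})
    (hcard : (latticePts P).ncard = 3 ^ d)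
    (F : Set (Fin d → ℝ)) (hF : IsFaceOf P F)
    (hfacet : Module.finrank ℝ (vectorSpan ℝ F) = d - 1)
    (x : Fin d → ℤ) (hx : ic x ∈ intrinsicInterior ℝ F) :
    ∀ y : Fin d → ℤ, y ∈ latticePts P → ic y ∉ F → x + y ∈ latticePts P :=
  add_interior_facet_point_general P hpoly hdim hsym hint hcard F hF hfacet x hx
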